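/- arXiv:1407.4018 — 5 statements merged into one kernel-verified Lean document; each statement's English description precedes it below -/
import Mathlib

section
/- Let X be a Banach space over ℝ or ℂ, let f: X → ℝ be a nonconstant Lipschitz function, let ε > 0, and let A ⊆ S_X. If the closed convex hull of A intersects S(S_X, f, ε), then A itself intersects S(S_X, f, ε). -/
/-!
If `A` misses the Lip-slice, then every unit vector `a ∈ A` is a direction along which `f`
grows at rate at most `‖f‖ - ε`: otherwise the pair `x + t • a`, `x` would put `a` into the
slice. Directions with a given bound `c` on the growth rate form a convex set, closed since `f`
is continuous, so the bound passes to the closed convex hull of `A`. A point of the slice,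
however, is the direction `(x₁ - x₂)/‖x₁ - x₂‖` of a pair on which `f` grows faster than
`‖f‖ - ε`.
-/

open Set Metric Topology

/-- The Lipschitz seminorm `‖f‖ = sup { ‖f x₁ - f x₂‖ / ‖x₁ - x₂‖ : x₁ ≠ x₂ }`. -/
noncomputable def lipSemi {X Y : Type*} [NormedAddCommGroup X] [NormedAddCommGroup Y]
    (f : X → Y) : ℝ :=
  sSup {r : ℝ | ∃ x₁ x₂ : X, x₁ ≠ x₂ ∧ r = ‖f x₁ - f x₂‖ / ‖x₁ - x₂‖}

/-- The Lip-slice `S(S_X, f, ε)` of the unit sphere generated by a Lipschitz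
functional `f : X → ℝ` and `ε > 0`. -/
def lipSlice {X : Type*} [NormedAddCommGroup X] [NormedSpace ℝ X]
    (f : X → ℝ) (ε : ℝ) : Set X :=
  {z | ∃ x₁ x₂ : X, x₁ ≠ x₂ ∧ z = ‖x₁ - x₂‖⁻¹ • (x₁ - x₂) ∧
    lipSemi f - ε < (f x₁ - f x₂) / ‖x₁ - x₂‖}

/-- `S` is a Lip-slice of the unit sphere of `X`. -/
def IsLipSlice {X : Type*} [NormedAddCommGroup X] [NormedSpace ℝ X] (S : Set X) : Prop :=
  ∃ (f : X → ℝ) (ε : ℝ), (∃ C, LipschitzWith C f) ∧ (∃ x y : X, f x ≠ f y) ∧ 0 < ε ∧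
    S = lipSlice f ε

/-- A rank-one bounded linear operator: `T = g(·) • u`. -/
def RankOne (𝕜 : Type*) [RCLike 𝕜] {X : Type*} [NormedAddCommGroup X] [NormedSpace 𝕜 X]
    (T : X →L[𝕜] X) : Prop :=
  ∃ (g : X →L[𝕜] 𝕜) (u : X), ∀ x, T x = g x • u

/-- The Daugavet property: every rank-one operator satisfies `‖Id + T‖ = 1 + ‖T‖`. -/
def DaugavetProperty (𝕜 : Type*) [RCLike 𝕜] (X : Type*) [NormedAddCommGroup X]
    [NormedSpace 𝕜 X] : Prop :=
  ∀ T : X →L[𝕜] X, RankOne 𝕜 T → ‖ContinuousLinearMap.id 𝕜 X + T‖ = 1 + ‖T‖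

/-- The alternative Daugavet property: every rank-one operator satisfies
`max_{θ ∈ 𝕋} ‖Id + θT‖ = 1 + ‖T‖`. -/
def AltDaugavetProperty (𝕜 : Type*) [RCLike 𝕜] (X : Type*) [NormedAddCommGroup X]
    [NormedSpace 𝕜 X] : Prop :=
  ∀ T : X →L[𝕜] X, RankOne 𝕜 T →
    IsGreatest {r : ℝ | ∃ θ : 𝕜, ‖θ‖ = 1 ∧ r = ‖ContinuousLinearMap.id 𝕜 X + θ • T‖}
      (1 + ‖T‖)

/-- `S` is a slice of the set `A`: a nonempty set of the form `{x ∈ A | Re f x > α}`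
with `f` a nonzero continuous linear functional. -/
def IsSlice (𝕜 : Type*) [RCLike 𝕜] {X : Type*} [NormedAddCommGroup X] [NormedSpace 𝕜 X]
    (A S : Set X) : Prop :=
  S.Nonempty ∧ ∃ (f : X →L[𝕜] 𝕜) (α : ℝ), f ≠ 0 ∧ S = {x ∈ A | α < RCLike.re (f x)}

/-- Slicely countably determined set. -/
def IsSCD (𝕜 : Type*) [RCLike 𝕜] {X : Type*} [NormedAddCommGroup X] [NormedSpace 𝕜 X]
    [NormedSpace ℝ X] (A : Set X) : Prop :=
  ∃ S : ℕ → Set X, (∀ n, IsSlice 𝕜 A (S n)) ∧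
    ∀ B ⊆ A, (∀ n, (B ∩ S n).Nonempty) → A ⊆ closure (convexHull ℝ B)

/-- The slope set of a map `T : X → X`. -/
def lipSlope {X : Type*} [NormedAddCommGroup X] [NormedSpace ℝ X] (T : X → X) : Set X :=
  {z | ∃ x₁ x₂ : X, x₁ ≠ x₂ ∧ z = ‖x₁ - x₂‖⁻¹ • (T x₁ - T x₂)}

/-- `K(X*)`: the intersection of the dual unit sphere with the weak*-closure of the
set of extreme points of the dual unit ball, as a subset of the weak* dual. -/
noncomputable def Kdual (𝕜 : Type*) [RCLike 𝕜] (X : Type*) [NormedAddCommGroup X]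
    [NormedSpace 𝕜 X] : Set (WeakDual 𝕜 X) :=
  {φ | ‖WeakDual.toStrongDual φ‖ = 1} ∩
    closure (WeakDual.toStrongDual ⁻¹'
      Set.extremePoints ℝ (closedBall (0 : StrongDual 𝕜 X) 1))

/-- `D(S, ε) = {x* ∈ K(X*) : ∃ y ∈ S, Re x*(y) > 1 - ε}`. -/
def Dset (𝕜 : Type*) [RCLike 𝕜] {X : Type*} [NormedAddCommGroup X] [NormedSpace 𝕜 X]
    (S : Set X) (ε : ℝ) : Set ↥(Kdual 𝕜 X) :=
  {φ | ∃ y ∈ S, 1 - ε < RCLike.re ((φ : WeakDual 𝕜 X) y)}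

/-- `D̃(S, ε) = {x* ∈ K(X*) : ∃ y ∈ S, |x*(y)| > 1 - ε}`. -/
def DsetAbs (𝕜 : Type*) [RCLike 𝕜] {X : Type*} [NormedAddCommGroup X] [NormedSpace 𝕜 X]
    (S : Set X) (ε : ℝ) : Set ↥(Kdual 𝕜 X) :=
  {φ | ∃ y ∈ S, 1 - ε < ‖(φ : WeakDual 𝕜 X) y‖}

/-- A set is dentable if it admits slices of arbitrarily small diameter. -/
def Dentable (𝕜 : Type*) [RCLike 𝕜] {X : Type*} [NormedAddCommGroup X] [NormedSpace 𝕜 X]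
    (B : Set X) : Prop :=
  ∀ ε : ℝ, 0 < ε → ∃ S : Set X, IsSlice 𝕜 B S ∧ diam S < ε

/-- A sequence equivalent to the unit vector basis of `ℓ₁`. -/
def IsL1Seq (𝕜 : Type*) [RCLike 𝕜] {X : Type*} [NormedAddCommGroup X] [NormedSpace 𝕜 X]
    (x : ℕ → X) : Prop :=
  ∃ C : ℝ, 1 ≤ C ∧ ∀ (n : ℕ) (a : ℕ → 𝕜),
    C⁻¹ * (∑ k ∈ Finset.range n, ‖a k‖) ≤ ‖∑ k ∈ Finset.range n, a k • x k‖ ∧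
    ‖∑ k ∈ Finset.range n, a k • x k‖ ≤ C * (∑ k ∈ Finset.range n, ‖a k‖)

/-- Numerical radius of a bounded linear operator. -/
noncomputable def numRadius (𝕜 : Type*) [RCLike 𝕜] {X : Type*} [NormedAddCommGroup X]
    [NormedSpace 𝕜 X] (T : X →L[𝕜] X) : ℝ :=
  sSup {r : ℝ | ∃ (x : X) (f : X →L[𝕜] 𝕜), ‖x‖ = 1 ∧ ‖f‖ = 1 ∧ f x = 1 ∧ r = ‖f (T x)‖}

/-- Numerical index of a Banach space. -/
noncomputable def numIndex (𝕜 : Type*) [RCLike 𝕜] (X : Type*) [NormedAddCommGroup X]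
    [NormedSpace 𝕜 X] : ℝ :=
  sInf {r : ℝ | ∃ T : X →L[𝕜] X, ‖T‖ = 1 ∧ r = numRadius 𝕜 T}

/-- Numerical radius of a Lipschitz map. -/
noncomputable def lipNumRadius (𝕜 : Type*) [RCLike 𝕜] {X : Type*} [NormedAddCommGroup X]
    [NormedSpace 𝕜 X] (T : X → X) : ℝ :=
  sSup {r : ℝ | ∃ (x y : X) (f : X →L[𝕜] 𝕜), x ≠ y ∧
    RCLike.re (f (x - y)) = ‖f‖ * ‖x - y‖ ∧ ‖f‖ * ‖x - y‖ = ‖x - y‖ ^ 2 ∧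
    r = ‖f (T x - T y)‖ / ‖x - y‖ ^ 2}

/-- The Lipschitz numerical index of a Banach space. -/
noncomputable def lipNumIndex (𝕜 : Type*) [RCLike 𝕜] (X : Type*) [NormedAddCommGroup X]
    [NormedSpace 𝕜 X] : ℝ :=
  sInf {r : ℝ | ∃ T : X → X, (∃ C, LipschitzWith C T) ∧ lipSemi T = 1 ∧
    r = lipNumRadius 𝕜 T}

/-- The slice `S(S_X, Re f, ε)` of the unit sphere given by a linear functional. -/
def sphereSlice (𝕜 : Type*) [RCLike 𝕜] {X : Type*} [NormedAddCommGroup X]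
    [NormedSpace 𝕜 X] (f : X →L[𝕜] 𝕜) (ε : ℝ) : Set X :=
  {z | ‖z‖ = 1 ∧ 1 - ε < RCLike.re (f z)}

/-- `𝕋 • S`, the set of rotations of elements of `S` by unimodular scalars. -/
def circleSmul (𝕜 : Type*) [RCLike 𝕜] {X : Type*} [NormedAddCommGroup X]
    [NormedSpace 𝕜 X] (S : Set X) : Set X :=
  {w | ∃ (θ : 𝕜) (z : X), ‖θ‖ = 1 ∧ z ∈ S ∧ w = θ • z}

/-- Lushness of a Banach space. -/
def Lush (𝕜 : Type*) [RCLike 𝕜] (X : Type*) [NormedAddCommGroup X] [NormedSpace 𝕜 X]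
    [NormedSpace ℝ X] : Prop :=
  ∀ x y : X, ‖x‖ = 1 → ‖y‖ = 1 → ∀ ε : ℝ, 0 < ε → ∃ f : X →L[𝕜] 𝕜, ‖f‖ = 1 ∧
    y ∈ sphereSlice 𝕜 f ε ∧
    infDist x (convexHull ℝ (circleSmul 𝕜 (sphereSlice 𝕜 f ε))) < ε

section DirectionsSlopeLE

variable {E : Type*} [AddCommGroup E] [Module ℝ E]

def directionsSlopeLE (f : E → ℝ) (c : ℝ) : Set E :=
  {d | ∀ (x : E) (t : ℝ), 0 ≤ t → f (x + t • d) ≤ f x + c * t}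

theorem convex_directionsSlopeLE (f : E → ℝ) (c : ℝ) : Convex ℝ (directionsSlopeLE f c) := by
  intro d₁ hd₁ d₂ hd₂ a b ha hb hab x t ht
  have hsplit : x + t • (a • d₁ + b • d₂) = (x + (t * a) • d₁) + (t * b) • d₂ := by
    rw [smul_add, smul_smul, smul_smul, add_assoc]
  calc f (x + t • (a • d₁ + b • d₂))
      ≤ f (x + (t * a) • d₁) + c * (t * b) := hsplit ▸ hd₂ _ _ (mul_nonneg ht hb)
    _ ≤ f x + c * (t * a) + c * (t * b) := by gcongr; exact hd₁ _ _ (mul_nonneg ht ha)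
    _ = f x + c * t := by linear_combination c * t * hab

theorem isClosed_directionsSlopeLE [TopologicalSpace E] [ContinuousAdd E] [ContinuousSMul ℝ E]
    {f : E → ℝ} (hf : Continuous f) (c : ℝ) : IsClosed (directionsSlopeLE f c) := by
  simp only [directionsSlopeLE, ofPred_forall]
  exact isClosed_iInter fun x => isClosed_iInter fun t => isClosed_iInter fun _ =>
    isClosed_le (hf.comp (continuous_const.add (continuous_const.smul continuous_id)))
      continuous_const

theorem closure_convexHull_subset_directionsSlopeLE [TopologicalSpace E] [ContinuousAdd E]
    [ContinuousSMul ℝ E] {f : E → ℝ} (hf : Continuous f) {c : ℝ} {A : Set E}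
    (hA : A ⊆ directionsSlopeLE f c) : closure (convexHull ℝ A) ⊆ directionsSlopeLE f c :=
  closure_minimal (convexHull_min hA (convex_directionsSlopeLE f c))
    (isClosed_directionsSlopeLE hf c)

end DirectionsSlopeLE

section LipSlice

variable {X : Type*} [NormedAddCommGroup X] [NormedSpace ℝ X]

theorem disjoint_lipSlice_directionsSlopeLE (f : X → ℝ) (ε : ℝ) :
    Disjoint (lipSlice f ε) (directionsSlopeLE f (lipSemi f - ε)) := by
  rw [disjoint_left]
  rintro _ ⟨x₁, x₂, hne, rfl, hslope⟩ hdir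
  have hpos : 0 < ‖x₁ - x₂‖ := norm_pos_iff.2 (sub_ne_zero.2 hne)
  have hstep := hdir x₂ ‖x₁ - x₂‖ hpos.le
  rw [smul_smul, mul_inv_cancel₀ hpos.ne', one_smul, add_sub_cancel] at hstep
  rw [lt_div_iff₀ hpos] at hslope
  linarith

theorem subset_directionsSlopeLE_of_disjoint_lipSlice {f : X → ℝ} {ε : ℝ} {A : Set X}
    (hA : A ⊆ sphere (0 : X) 1) (hdisj : Disjoint A (lipSlice f ε)) :
    A ⊆ directionsSlopeLE f (lipSemi f - ε) := by
  intro a ha x t ht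
  rcases ht.eq_or_lt with rfl | htpos
  · simp
  have hnorm : ‖t • a‖ = t := by
    rw [norm_smul, Real.norm_of_nonneg ht, mem_sphere_zero_iff_norm.1 (hA ha), mul_one]
  have hne : x + t • a ≠ x := by
    intro heq
    rw [add_eq_left.1 heq, norm_zero] at hnorm
    exact htpos.ne hnorm
  have hnot_slope : ¬ lipSemi f - ε < (f (x + t • a) - f x) / ‖x + t • a - x‖ := by
    intro hslope
    refine disjoint_left.1 hdisj ha ⟨x + t • a, x, hne, ?_, hslope⟩
    rw [add_sub_cancel_left, hnorm, smul_smul, inv_mul_cancel₀ htpos.ne', one_smul]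
  rw [add_sub_cancel_left, hnorm, not_lt, div_le_iff₀ htpos] at hnot_slope
  linarith

end LipSlice

theorem fundamental_lemma_lip_slices_general {X : Type*} [NormedAddCommGroup X]
    [NormedSpace ℝ X]
    (f : X → ℝ) (hlip : ∃ C, LipschitzWith C f)
    (ε : ℝ) (A : Set X) (hA : A ⊆ sphere (0 : X) 1)
    (h : (closure (convexHull ℝ A) ∩ lipSlice f ε).Nonempty) :
    (A ∩ lipSlice f ε).Nonempty := by
  obtain ⟨C, hC⟩ := hlip
  obtain ⟨z, hz_hull, hz_slice⟩ := h
  by_contra hmiss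
  rw [not_nonempty_iff_eq_empty, ← disjoint_iff_inter_eq_empty] at hmiss
  have hA_dirs := subset_directionsSlopeLE_of_disjoint_lipSlice hA hmiss
  exact disjoint_left.1 (disjoint_lipSlice_directionsSlopeLE f ε) hz_slice
    (closure_convexHull_subset_directionsSlopeLE hC.continuous hA_dirs hz_hull)

/-- Fundamental lemma: if the closed convex hull of a subset of the unit sphere meets a
Lip-slice, then so does the set itself. -/
theorem fundamental_lemma_lip_slices {𝕜 X : Type*} [RCLike 𝕜] [NormedAddCommGroup X] [NormedSpace 𝕜 X]
    [NormedSpace ℝ X] [IsScalarTower ℝ 𝕜 X] [CompleteSpace X]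
    (f : X → ℝ) (hlip : ∃ C, LipschitzWith C f) (hnc : ∃ x y : X, f x ≠ f y)
    (ε : ℝ) (hε : 0 < ε) (A : Set X) (hA : A ⊆ sphere (0 : X) 1)
    (h : (closure (convexHull ℝ A) ∩ lipSlice f ε).Nonempty) :
    (A ∩ lipSlice f ε).Nonempty :=
  fundamental_lemma_lip_slices_general f hlip ε A hA h
end

section
/- Let X be a Banach space with the Daugavet property, let ε > 0, and let S be a Lip-slice of S_X. Then for every x ∈ S_X there exists y ∈ S such that ‖x + y‖ > 2 − ε. -/
open Set Metric Topology

/-! By the Daugavet property every slice of the unit ball contains a point `y` of the unit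
sphere with `‖x + y‖ > 2 - ε`, so by Hahn–Banach the closed convex hull of these points is the
whole unit ball. The directions `w` along which `f` never grows faster than rate `m`
(`f (b + t • w) ≤ f b + m * t` for all `b` and `t ≥ 0`) form a closed convex set. Taking `m` to
be the level of the Lip-slice, this set misses the unit vector of some `p - q` with large slope,
hence misses one of the points `y`; a segment in direction `y` along which `f` grows faster than
`m` shows that `y` lies in the Lip-slice. -/

theorem RCLike.exists_norm_eq_one_mul_eq_norm {𝕜 : Type*} [RCLike 𝕜] (c : 𝕜) :
    ∃ θ : 𝕜, ‖θ‖ = 1 ∧ θ * c = ‖c‖ := by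
  rcases eq_or_ne c 0 with rfl | hc
  · exact ⟨1, norm_one, by simp⟩
  · refine ⟨‖c‖ / c, ?_, div_mul_cancel₀ _ hc⟩
    rw [norm_div, RCLike.norm_ofReal, abs_norm, div_self (norm_ne_zero_iff.mpr hc)]

theorem ContinuousLinearMap.exists_norm_eq_one_lt_apply_of_lt_opNorm {𝕜 E F : Type*}
    [RCLike 𝕜] [NormedAddCommGroup E] [NormedSpace 𝕜 E] [Nontrivial E]
    [NormedAddCommGroup F] [NormedSpace 𝕜 F] (T : E →L[𝕜] F) {r : ℝ} (hr : r < ‖T‖) :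
    ∃ z : E, ‖z‖ = 1 ∧ r < ‖T z‖ := by
  rw [← T.sSup_sphere_eq_norm] at hr
  obtain ⟨-, ⟨z, hz, rfl⟩, hrz⟩ :=
    exists_lt_of_lt_csSup
      ((Set.nonempty_coe_sort.mp (NormedSpace.sphere_nonempty_rclike 𝕜 zero_le_one)).image _) hr
  exact ⟨z, mem_sphere_zero_iff_norm.mp hz, hrz⟩

section Daugavet

variable {𝕜 X : Type*} [RCLike 𝕜] [NormedAddCommGroup X] [NormedSpace 𝕜 X]

theorem DaugavetProperty.exists_norm_add_gt_in_slice_of_norm_eq_one (hX : DaugavetProperty 𝕜 X)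
    {g : StrongDual 𝕜 X} (hg : ‖g‖ = 1) {x : X} (hx : ‖x‖ = 1) {δ : ℝ} (hδ : 0 < δ) :
    ∃ y : X, ‖y‖ = 1 ∧ 1 - δ < RCLike.re (g y) ∧ 2 - δ < ‖x + y‖ := by
  have : Nontrivial X := ⟨⟨x, 0, ne_zero_of_norm_ne_zero (hx.trans_ne one_ne_zero)⟩⟩
  have hT : ‖ContinuousLinearMap.id 𝕜 X + g.smulRight x‖ = 2 := by
    rw [hX _ ⟨g, x, fun _ => rfl⟩, ContinuousLinearMap.norm_smulRight_apply, hg, hx]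
    norm_num
  obtain ⟨z, hz, hTz⟩ := (ContinuousLinearMap.id 𝕜 X + g.smulRight x)
    |>.exists_norm_eq_one_lt_apply_of_lt_opNorm (r := 2 - δ / 2) (by linarith)
  simp only [FunLike.coe_add, Pi.add_apply, ContinuousLinearMap.id_apply,
    ContinuousLinearMap.smulRight_apply] at hTz
  have hgz : 1 - δ / 2 < ‖g z‖ := by
    have := norm_add_le z (g z • x)
    rw [norm_smul, hz, hx, mul_one] at this
    linarith
  obtain ⟨θ, hθ, hθgz⟩ := RCLike.exists_norm_eq_one_mul_eq_norm (g z)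
  have hgy : g (θ • z) = ‖g z‖ := by rw [map_smul, smul_eq_mul, hθgz]
  refine ⟨θ • z, by rw [norm_smul, hθ, hz, one_mul], by rw [hgy, RCLike.ofReal_re]; linarith, ?_⟩
  -- rotating `z + g z • x` by `θ` makes its `x`-coefficient the real number `‖g z‖ ≈ 1`
  have hsplit : x + θ • z = θ • (z + g z • x) + ((1 : 𝕜) - ‖g z‖) • x := by
    rw [smul_add, smul_smul, hθgz, sub_smul, one_smul]
    abel
  have hrest : ‖((1 : 𝕜) - ‖g z‖) • x‖ = 1 - ‖g z‖ := by
    rw [norm_smul, hx, mul_one, ← RCLike.ofReal_one, ← RCLike.ofReal_sub, RCLike.norm_ofReal,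
      abs_of_nonneg (sub_nonneg.mpr ((g.le_opNorm z).trans (by rw [hg, hz, one_mul])))]
  have := norm_sub_le (x + θ • z) (((1 : 𝕜) - ‖g z‖) • x)
  rw [← eq_sub_of_add_eq hsplit.symm, norm_smul θ, hθ, one_mul, hrest] at this
  linarith

theorem DaugavetProperty.exists_norm_add_gt_in_slice (hX : DaugavetProperty 𝕜 X)
    (g : StrongDual 𝕜 X) {α : ℝ} (hα : α < ‖g‖) {x : X} (hx : ‖x‖ = 1) {δ : ℝ} (hδ : 0 < δ) :
    ∃ y : X, ‖y‖ = 1 ∧ α < RCLike.re (g y) ∧ 2 - δ < ‖x + y‖ := by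
  rcases eq_or_ne g 0 with rfl | hg
  · refine ⟨x, hx, by simpa using hα, ?_⟩
    rw [← two_smul 𝕜 x, norm_smul, RCLike.norm_two, hx]
    linarith
  have hg' : 0 < ‖g‖ := norm_pos_iff.mpr hg
  obtain ⟨y, hy, hgy, hxy⟩ := hX.exists_norm_add_gt_in_slice_of_norm_eq_one
    (norm_smul_inv_norm (𝕜 := 𝕜) hg) hx (lt_min hδ (sub_pos.mpr ((div_lt_one hg').mpr hα)))
  refine ⟨y, hy, ?_, hxy.trans_le' (by linarith [min_le_left δ (1 - α / ‖g‖)])⟩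
  have hre : RCLike.re (((‖g‖⁻¹ : 𝕜) • g) y) = ‖g‖⁻¹ * RCLike.re (g y) := by
    rw [smul_apply, smul_eq_mul, ← RCLike.ofReal_inv, RCLike.re_ofReal_mul]
  rw [hre] at hgy
  have : ‖g‖⁻¹ * α < ‖g‖⁻¹ * RCLike.re (g y) := by
    rw [← div_eq_inv_mul]
    linarith [min_le_right δ (1 - α / ‖g‖)]
  exact lt_of_mul_lt_mul_left this (inv_nonneg.mpr hg'.le)

variable [NormedSpace ℝ X] [IsScalarTower ℝ 𝕜 X]

theorem DaugavetProperty.closedBall_subset_closure_convexHull (hX : DaugavetProperty 𝕜 X)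
    {x : X} (hx : ‖x‖ = 1) {δ : ℝ} (hδ : 0 < δ) :
    closedBall (0 : X) 1 ⊆ closure (convexHull ℝ {y : X | ‖y‖ = 1 ∧ 2 - δ < ‖x + y‖}) := by
  intro u hu
  by_contra hu'
  obtain ⟨g, c, hgc, hcu⟩ := RCLike.geometric_hahn_banach_closed_point (𝕜 := 𝕜)
    (convex_convexHull ℝ _).closure isClosed_closure hu'
  have hc : c < ‖g‖ := calc
    c < RCLike.re (g u) := hcu
    _ ≤ ‖g u‖ := RCLike.re_le_norm _
    _ ≤ ‖g‖ := g.le_of_opNorm_le_of_le le_rfl (mem_closedBall_zero_iff.mp hu) |>.trans (by simp)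
  obtain ⟨y, hy, hcy, hxy⟩ := hX.exists_norm_add_gt_in_slice g hc hx hδ
  exact (hgc y (subset_closure (subset_convexHull ℝ _ ⟨hy, hxy⟩))).not_gt hcy

end Daugavet

def slopeLE {E : Type*} [AddCommGroup E] [Module ℝ E] (f : E → ℝ) (m : ℝ) : Set E :=
  {w | ∀ b : E, ∀ t : ℝ, 0 ≤ t → f (b + t • w) ≤ f b + m * t}

section slopeLE

variable {E : Type*} [AddCommGroup E] [Module ℝ E] {f : E → ℝ} {m : ℝ}

theorem convex_slopeLE : Convex ℝ (slopeLE f m) := by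
  intro w₁ hw₁ w₂ hw₂ a c ha hc hac b t ht
  have h₁ := hw₁ b (t * a) (mul_nonneg ht ha)
  have h₂ := hw₂ (b + (t * a) • w₁) (t * c) (mul_nonneg ht hc)
  rw [add_assoc] at h₂
  calc f (b + t • (a • w₁ + c • w₂)) ≤ f b + m * (t * a) + m * (t * c) := by
        rw [smul_add, smul_smul, smul_smul]; linarith
    _ = f b + m * t := by rw [add_assoc, ← mul_add, ← mul_add, hac, mul_one]

theorem isClosed_slopeLE [TopologicalSpace E] [ContinuousAdd E] [ContinuousSMul ℝ E]
    (hf : Continuous f) : IsClosed (slopeLE f m) := by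
  simp only [slopeLE, Set.ofPred_forall]
  exact isClosed_iInter fun b => isClosed_iInter fun t => isClosed_iInter fun _ =>
    isClosed_le (by fun_prop) continuous_const

theorem closure_convexHull_subset_slopeLE [TopologicalSpace E] [ContinuousAdd E]
    [ContinuousSMul ℝ E] (hf : Continuous f) {D : Set E} (hD : D ⊆ slopeLE f m) :
    closure (convexHull ℝ D) ⊆ slopeLE f m :=
  closure_minimal (convexHull_min hD convex_slopeLE) (isClosed_slopeLE hf)

end slopeLE

section lipSlice

variable {X : Type*} [NormedAddCommGroup X] {f : X → ℝ}

theorem exists_lipSemi_sub_lt_slope (hf : ∃ a b : X, f a ≠ f b) {ε : ℝ} (hε : 0 < ε) :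
    ∃ p q : X, p ≠ q ∧ lipSemi f - ε < (f p - f q) / ‖p - q‖ := by
  obtain ⟨a, b, hab⟩ := hf
  obtain ⟨-, ⟨x₁, x₂, hx, rfl⟩, hlt⟩ :=
    exists_lt_of_lt_csSup (s := {r : ℝ | ∃ x₁ x₂ : X, x₁ ≠ x₂ ∧ r = ‖f x₁ - f x₂‖ / ‖x₁ - x₂‖})
      ⟨_, a, b, fun h => hab (congrArg f h), rfl⟩ (sub_lt_self (lipSemi f) hε)
  rcases le_total (f x₂) (f x₁) with hle | hle
  · exact ⟨x₁, x₂, hx, by rwa [Real.norm_eq_abs, abs_of_nonneg (sub_nonneg.mpr hle)] at hlt⟩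
  · refine ⟨x₂, x₁, hx.symm, ?_⟩
    rwa [Real.norm_eq_abs, abs_of_nonpos (sub_nonpos.mpr hle), neg_sub, norm_sub_rev] at hlt

theorem inv_norm_smul_sub_notMem_slopeLE [NormedSpace ℝ X] {p q : X} (hpq : p ≠ q) {m : ℝ}
    (hm : m < (f p - f q) / ‖p - q‖) : ‖p - q‖⁻¹ • (p - q) ∉ slopeLE f m := by
  have hρ : 0 < ‖p - q‖ := norm_pos_iff.mpr (sub_ne_zero.mpr hpq)
  intro h
  have := h q ‖p - q‖ hρ.le
  rw [smul_smul, mul_inv_cancel₀ hρ.ne', one_smul, add_sub_cancel] at this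
  rw [lt_div_iff₀ hρ] at hm
  linarith

theorem mem_lipSlice_of_notMem_slopeLE [NormedSpace ℝ X] {y : X} (hy : ‖y‖ = 1) {ε : ℝ}
    (h : y ∉ slopeLE f (lipSemi f - ε)) : y ∈ lipSlice f ε := by
  simp only [slopeLE, Set.mem_ofPred_eq, not_forall, not_le] at h
  obtain ⟨b, t, ht, hlt⟩ := h
  have ht' : 0 < t := ht.lt_of_ne (by rintro rfl; simp at hlt)
  have hnorm : ‖(b + t • y) - b‖ = t := by
    rw [add_sub_cancel_left, norm_smul, hy, mul_one, Real.norm_of_nonneg ht]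
  have hne : b + t • y ≠ b := fun h => by rw [h, sub_self, norm_zero] at hnorm; linarith
  refine ⟨b + t • y, b, hne, ?_, ?_⟩
  · rw [hnorm, add_sub_cancel_left, smul_smul, inv_mul_cancel₀ ht'.ne', one_smul]
  · rw [hnorm, lt_div_iff₀ ht']
    linarith

end lipSlice

theorem daugavet_lip_slice_norming_general {𝕜 X : Type*} [RCLike 𝕜] [NormedAddCommGroup X] [NormedSpace 𝕜 X]
    [NormedSpace ℝ X] [IsScalarTower ℝ 𝕜 X]
    (hX : DaugavetProperty 𝕜 X) (ε : ℝ) (hε : 0 < ε) (S : Set X) (hS : IsLipSlice S) :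
    ∀ x : X, ‖x‖ = 1 → ∃ y ∈ S, 2 - ε < ‖x + y‖ := by
  obtain ⟨f, ε₀, ⟨C, hf⟩, hnonconst, hε₀, rfl⟩ := hS
  intro x hx
  obtain ⟨p, q, hpq, hslope⟩ := exists_lipSemi_sub_lt_slope hnonconst hε₀
  have hu : ‖p - q‖⁻¹ • (p - q) ∈ closedBall (0 : X) 1 := by
    rw [mem_closedBall_zero_iff, norm_smul, Real.norm_of_nonneg (by positivity),
      inv_mul_cancel₀ (norm_ne_zero_iff.mpr (sub_ne_zero.mpr hpq))]
  obtain ⟨y, ⟨hy, hxy⟩, hyf⟩ :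
      ∃ y ∈ {y : X | ‖y‖ = 1 ∧ 2 - ε < ‖x + y‖}, y ∉ slopeLE f (lipSemi f - ε₀) := by
    by_contra! h
    exact inv_norm_smul_sub_notMem_slopeLE hpq hslope <|
      closure_convexHull_subset_slopeLE hf.continuous h
        (hX.closedBall_subset_closure_convexHull hx hε hu)
  exact ⟨y, mem_lipSlice_of_notMem_slopeLE hy hyf, hxy⟩

/-- In a space with the Daugavet property, every Lip-slice almost norms every
point of the sphere. -/
theorem daugavet_lip_slice_norming {𝕜 X : Type*} [RCLike 𝕜] [NormedAddCommGroup X] [NormedSpace 𝕜 X]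
    [NormedSpace ℝ X] [IsScalarTower ℝ 𝕜 X] [CompleteSpace X]
    (hX : DaugavetProperty 𝕜 X) (ε : ℝ) (hε : 0 < ε) (S : Set X) (hS : IsLipSlice S) :
    ∀ x : X, ‖x‖ = 1 → ∃ y ∈ S, 2 - ε < ‖x + y‖ :=
  daugavet_lip_slice_norming_general hX ε hε S hS
end

section
/- Let X be a Banach space over 𝕂 (𝕂 = ℝ or ℂ) with the alternative Daugavet property, let ε > 0, and let S be a Lip-slice of S_X. Then for every x ∈ S_X there exists y ∈ S such that max_{θ ∈ 𝕋} ‖x + θ·y‖ > 2 − ε, where 𝕋 = {θ ∈ 𝕂 : |θ| = 1}. -/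
/-!
For a Lipschitz `f : X → ℝ`, the upper slope `p z = sup_{v, t > 0} (f (v + t z) - f v) / t` is
sublinear and bounded by `‖f‖ ‖z‖`, and a unit vector `y` lies in the Lip-slice `S(S_X, f, ε)`
exactly when `p y > ‖f‖ - ε`. Hahn–Banach gives a linear `g ≤ p` attaining `p` at a point of a
thinner Lip-slice, so `‖g‖` is close to `‖f‖` and the linear slice `{y ∈ S_X : g y > ‖f‖ - ε}`
lies inside the Lip-slice. It therefore suffices to treat a slice `{y ∈ S_X : Re h y > 1 - δ}`
with `‖h‖ = 1`. The alternative Daugavet property for the rank-one operator `h(·) x` yields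
`θ ∈ 𝕋` and `z ∈ B_X` with `‖z + θ h(z) x‖ ≈ 2`; then `|h z| ≈ 1`, and the normalization of `z`,
rotated so that `h` is real and positive on it, is the required `y`.
-/

open Set Metric Topology

section SublinearHahnBanach

variable {E : Type*} [AddCommGroup E] [Module ℝ E]

theorem exists_linearMap_eq_and_le_of_sublinear (N : E → ℝ)
    (N_hom : ∀ c : ℝ, 0 < c → ∀ x, N (c • x) = c * N x) (N_add : ∀ x y, N (x + y) ≤ N x + N y)
    (x : E) : ∃ g : E →ₗ[ℝ] ℝ, g x = N x ∧ ∀ y, g y ≤ N y := by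
  have N_zero : N 0 = 0 := by
    have := N_hom 2 two_pos 0
    rw [smul_zero] at this
    linarith
  let φ : E →ₗ.[ℝ] ℝ := LinearPMap.mkSpanSingleton' x (N x) fun c hc => by
    rcases smul_eq_zero.1 hc with rfl | rfl
    · exact zero_smul ℝ _
    · rw [N_zero, smul_zero]
  have hdom : ∀ c : ℝ, c * N x ≤ N (c • x) := by
    intro c
    rcases lt_trichotomy c 0 with hc | rfl | hc
    · have := N_add (c • x) ((-c) • x)
      rw [← add_smul, add_neg_cancel, zero_smul, N_zero, N_hom _ (neg_pos.2 hc)] at this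
      linarith
    · simp [N_zero]
    · exact (N_hom c hc x).ge
  obtain ⟨g, hg, hgN⟩ := exists_extension_of_le_sublinear φ N N_hom N_add (by
    rintro ⟨_, hy⟩
    obtain ⟨c, rfl⟩ := Submodule.mem_span_singleton.1 hy
    rw [LinearPMap.mkSpanSingleton'_apply]
    exact hdom c)
  exact ⟨g, (hg ⟨x, Submodule.mem_span_singleton_self x⟩).trans
    (LinearPMap.mkSpanSingleton'_apply_self _ _ _ _), hgN⟩

end SublinearHahnBanach

section Normalization

variable {E : Type*} [NormedAddCommGroup E] [NormedSpace ℝ E]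

theorem norm_inv_norm_smul_sub_le {a : E} (ha : ‖a‖ ≤ 1) : ‖‖a‖⁻¹ • a - a‖ ≤ 1 - ‖a‖ := by
  rcases eq_or_ne a 0 with rfl | ha0
  · simp
  have hpos : 0 < ‖a‖ := norm_pos_iff.2 ha0
  rw [show ‖a‖⁻¹ • a - a = (‖a‖⁻¹ - 1) • a by rw [sub_smul, one_smul], norm_smul,
    Real.norm_of_nonneg (sub_nonneg.2 (one_le_inv_iff₀.2 ⟨hpos, ha⟩)),
    sub_mul, inv_mul_cancel₀ hpos.ne', one_mul]

theorem two_mul_norm_add_sub_two_le {a b : E} (ha : ‖a‖ ≤ 1) (hb : ‖b‖ ≤ 1) :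
    2 * ‖a + b‖ - 2 ≤ ‖‖a‖⁻¹ • a + ‖b‖⁻¹ • b‖ := by
  have hsplit : a + b = (‖a‖⁻¹ • a + ‖b‖⁻¹ • b) - (‖a‖⁻¹ • a - a) - (‖b‖⁻¹ • b - b) := by abel
  have := norm_sub_le (‖a‖⁻¹ • a + ‖b‖⁻¹ • b - (‖a‖⁻¹ • a - a)) (‖b‖⁻¹ • b - b)
  have := norm_sub_le (‖a‖⁻¹ • a + ‖b‖⁻¹ • b) (‖a‖⁻¹ • a - a)
  have := norm_add_le a b
  rw [← hsplit] at *
  linarith [norm_inv_norm_smul_sub_le ha, norm_inv_norm_smul_sub_le hb]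

end Normalization

section LipschitzSlopes

variable {X : Type*} [NormedAddCommGroup X] {C : NNReal}

theorem LipschitzWith.bddAbove_lipSemi_set {Y : Type*} [NormedAddCommGroup Y] {f : X → Y}
    (hC : LipschitzWith C f) :
    BddAbove {r : ℝ | ∃ x₁ x₂ : X, x₁ ≠ x₂ ∧ r = ‖f x₁ - f x₂‖ / ‖x₁ - x₂‖} := by
  refine ⟨C, ?_⟩
  rintro _ ⟨x₁, x₂, hne, rfl⟩
  rw [div_le_iff₀ (norm_pos_iff.2 (sub_ne_zero.2 hne)), ← dist_eq_norm, ← dist_eq_norm]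
  exact hC.dist_le_mul x₁ x₂

theorem LipschitzWith.norm_sub_div_le_lipSemi {Y : Type*} [NormedAddCommGroup Y] {f : X → Y}
    (hC : LipschitzWith C f) {x₁ x₂ : X} (hne : x₁ ≠ x₂) :
    ‖f x₁ - f x₂‖ / ‖x₁ - x₂‖ ≤ lipSemi f :=
  le_csSup hC.bddAbove_lipSemi_set ⟨x₁, x₂, hne, rfl⟩

theorem LipschitzWith.lipSemi_pos {f : X → ℝ} (hC : LipschitzWith C f) {a b : X}
    (hab : f a ≠ f b) : 0 < lipSemi f :=
  have hne : a ≠ b := fun h => hab (congrArg f h)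
  (div_pos (norm_pos_iff.2 (sub_ne_zero.2 hab)) (norm_pos_iff.2 (sub_ne_zero.2 hne))).trans_le
    (hC.norm_sub_div_le_lipSemi hne)

end LipschitzSlopes

section SupSlope

variable {X : Type*} [NormedAddCommGroup X] [NormedSpace ℝ X] {f : X → ℝ} {C : NNReal}

def incrementSlopes (f : X → ℝ) (z : X) : Set ℝ :=
  {r | ∃ (v : X) (t : ℝ), 0 < t ∧ r = (f (v + t • z) - f v) / t}

noncomputable def supSlope (f : X → ℝ) (z : X) : ℝ := sSup (incrementSlopes f z)

theorem incrementSlopes_nonempty (f : X → ℝ) (z : X) : (incrementSlopes f z).Nonempty :=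
  ⟨_, 0, 1, one_pos, rfl⟩

open scoped Pointwise in
theorem incrementSlopes_smul (f : X → ℝ) {c : ℝ} (hc : 0 < c) (z : X) :
    incrementSlopes f (c • z) = c • incrementSlopes f z := by
  ext r
  constructor
  · rintro ⟨v, t, ht, rfl⟩
    refine ⟨_, ⟨v, t * c, mul_pos ht hc, rfl⟩, ?_⟩
    dsimp only
    rw [smul_eq_mul, mul_smul]
    field_simp
  · rintro ⟨_, ⟨v, t, ht, rfl⟩, rfl⟩
    refine ⟨v, t / c, div_pos ht hc, ?_⟩
    rw [smul_smul, div_mul_cancel₀ t hc.ne']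
    dsimp only
    rw [smul_eq_mul]
    field_simp

theorem supSlope_smul (f : X → ℝ) {c : ℝ} (hc : 0 < c) (z : X) :
    supSlope f (c • z) = c * supSlope f z := by
  rw [supSlope, incrementSlopes_smul f hc, Real.sSup_smul_of_nonneg hc.le, smul_eq_mul, supSlope]

theorem LipschitzWith.le_lipSemi_mul_norm_of_mem_incrementSlopes (hC : LipschitzWith C f)
    {z : X} {r : ℝ} (hr : r ∈ incrementSlopes f z) : r ≤ lipSemi f * ‖z‖ := by
  obtain ⟨v, t, ht, rfl⟩ := hr
  rcases eq_or_ne z 0 with rfl | hz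
  · simp
  have hne : v + t • z ≠ v := by simpa using ⟨ht.ne', hz⟩
  have hdist : ‖v + t • z - v‖ = t * ‖z‖ := by
    rw [add_sub_cancel_left, norm_smul, Real.norm_of_nonneg ht.le]
  calc (f (v + t • z) - f v) / t ≤ ‖f (v + t • z) - f v‖ / t := by
        gcongr; exact Real.le_norm_self _
    _ = ‖f (v + t • z) - f v‖ / ‖v + t • z - v‖ * ‖z‖ := by
        rw [hdist]; field_simp [norm_ne_zero_iff.2 hz]
    _ ≤ lipSemi f * ‖z‖ := by gcongr; exact hC.norm_sub_div_le_lipSemi hne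

theorem LipschitzWith.bddAbove_incrementSlopes (hC : LipschitzWith C f) (z : X) :
    BddAbove (incrementSlopes f z) :=
  ⟨_, fun _ => hC.le_lipSemi_mul_norm_of_mem_incrementSlopes⟩

theorem LipschitzWith.le_supSlope (hC : LipschitzWith C f) {z : X} {r : ℝ}
    (hr : r ∈ incrementSlopes f z) : r ≤ supSlope f z :=
  le_csSup (hC.bddAbove_incrementSlopes z) hr

theorem LipschitzWith.supSlope_le (hC : LipschitzWith C f) (z : X) :
    supSlope f z ≤ lipSemi f * ‖z‖ :=
  csSup_le (incrementSlopes_nonempty f z) fun _ => hC.le_lipSemi_mul_norm_of_mem_incrementSlopes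

theorem LipschitzWith.supSlope_add_le (hC : LipschitzWith C f) (y z : X) :
    supSlope f (y + z) ≤ supSlope f y + supSlope f z := by
  refine csSup_le (incrementSlopes_nonempty f _) ?_
  rintro _ ⟨v, t, ht, rfl⟩
  have hsplit : (f (v + t • (y + z)) - f v) / t
      = (f (v + t • y) - f v) / t + (f (v + t • y + t • z) - f (v + t • y)) / t := by
    rw [← add_div, sub_add_sub_cancel', smul_add, add_assoc]
  rw [hsplit]
  exact add_le_add (hC.le_supSlope ⟨v, t, ht, rfl⟩) (hC.le_supSlope ⟨v + t • y, t, ht, rfl⟩)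

theorem LipschitzWith.mem_lipSlice_iff (hC : LipschitzWith C f) {ε : ℝ} {y : X} :
    y ∈ lipSlice f ε ↔ ‖y‖ = 1 ∧ lipSemi f - ε < supSlope f y := by
  constructor
  · rintro ⟨x₁, x₂, hne, rfl, hlt⟩
    have hd : 0 < ‖x₁ - x₂‖ := norm_pos_iff.2 (sub_ne_zero.2 hne)
    refine ⟨norm_smul_inv_norm (sub_ne_zero.2 hne), hlt.trans_le (hC.le_supSlope ?_)⟩
    refine ⟨x₂, ‖x₁ - x₂‖, hd, ?_⟩
    rw [smul_inv_smul₀ hd.ne', add_sub_cancel]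
  · rintro ⟨hy, hlt⟩
    obtain ⟨_, ⟨v, t, ht, rfl⟩, hlt⟩ := exists_lt_of_lt_csSup (incrementSlopes_nonempty f y) hlt
    have hty : ‖v + t • y - v‖ = t := by
      rw [add_sub_cancel_left, norm_smul, hy, mul_one, Real.norm_of_nonneg ht.le]
    refine ⟨v + t • y, v, ?_, ?_, by rwa [hty]⟩
    · simpa [ht.ne'] using ne_zero_of_norm_ne_zero (hy.trans_ne one_ne_zero)
    · rw [hty, add_sub_cancel_left, inv_smul_smul₀ ht.ne']

theorem lipSlice_nonempty {a b : X} (hab : f a ≠ f b) {ε : ℝ} (hε : 0 < ε) :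
    (lipSlice f ε).Nonempty := by
  have hne : a ≠ b := fun h => hab (congrArg f h)
  have hlt : lipSemi f - ε < sSup {r : ℝ | ∃ x₁ x₂ : X, x₁ ≠ x₂ ∧ r = ‖f x₁ - f x₂‖ / ‖x₁ - x₂‖} :=
    sub_lt_self _ hε
  obtain ⟨_, ⟨p, q, hpq, rfl⟩, hlt⟩ := exists_lt_of_lt_csSup (by exact ⟨_, a, b, hne, rfl⟩) hlt
  rcases le_total (f q) (f p) with hqp | hpq'
  · exact ⟨_, p, q, hpq, rfl, by rwa [Real.norm_of_nonneg (sub_nonneg.2 hqp)] at hlt⟩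
  · refine ⟨_, q, p, hpq.symm, rfl, ?_⟩
    rwa [Real.norm_of_nonpos (sub_nonpos.2 hpq'), neg_sub, norm_sub_rev] at hlt

theorem LipschitzWith.exists_strongDual_subset_lipSlice (hC : LipschitzWith C f) {a b : X}
    (hab : f a ≠ f b) {ε : ℝ} (hε : 0 < ε) :
    ∃ g : StrongDual ℝ X, 0 < ‖g‖ ∧ lipSemi f - ε < ‖g‖ ∧
      {y | ‖y‖ = 1 ∧ lipSemi f - ε < g y} ⊆ lipSlice f ε := by
  obtain ⟨e, he⟩ := lipSlice_nonempty hab (lt_min hε (hC.lipSemi_pos hab))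
  obtain ⟨he1, hlt⟩ := hC.mem_lipSlice_iff.1 he
  obtain ⟨g, hge, hgle⟩ := exists_linearMap_eq_and_le_of_sublinear (supSlope f)
    (fun _ hc z => supSlope_smul f hc z) hC.supSlope_add_le e
  have hbound : ∀ u, ‖g u‖ ≤ lipSemi f * ‖u‖ := by
    intro u
    have hneg := (hgle (-u)).trans (hC.supSlope_le (-u))
    rw [map_neg, norm_neg] at hneg
    exact abs_le.2 ⟨by linarith, (hgle u).trans (hC.supSlope_le u)⟩
  let G : StrongDual ℝ X := g.mkContinuous (lipSemi f) hbound
  have hGe : supSlope f e ≤ ‖G‖ := by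
    calc supSlope f e = G e := hge.symm
      _ ≤ ‖G e‖ := Real.le_norm_self _
      _ ≤ ‖G‖ := by simpa [he1] using G.le_opNorm e
  refine ⟨G, by linarith [min_le_right ε (lipSemi f)], by linarith [min_le_left ε (lipSemi f)],
    fun y ⟨hy, hgy⟩ => hC.mem_lipSlice_iff.2 ⟨hy, hgy.trans_le (hgle y)⟩⟩

end SupSlope

section SphereSlices

variable {𝕜 X : Type*} [RCLike 𝕜] [NormedAddCommGroup X] [NormedSpace 𝕜 X]

theorem sphereSlice_mono {h : StrongDual 𝕜 X} {δ δ' : ℝ} (hδ : δ ≤ δ') :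
    sphereSlice 𝕜 h δ ⊆ sphereSlice 𝕜 h δ' :=
  fun _ ⟨hy, hlt⟩ => ⟨hy, by linarith⟩

theorem exists_sphereSlice_eq_of_lt_norm [NormedSpace ℝ X] [IsScalarTower ℝ 𝕜 X]
    (g : StrongDual ℝ X) {α : ℝ} (hg : 0 < ‖g‖) (hα : α < ‖g‖) :
    ∃ (h : StrongDual 𝕜 X) (δ : ℝ), ‖h‖ = 1 ∧ 0 < δ ∧
      sphereSlice 𝕜 h δ = {y | ‖y‖ = 1 ∧ α < g y} := by
  refine ⟨((‖g‖⁻¹ : ℝ) : 𝕜) • g.extendRCLike, 1 - α / ‖g‖, ?_, ?_, ?_⟩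
  · rw [norm_smul, StrongDual.norm_extendRCLike, RCLike.norm_ofReal, abs_inv, abs_norm,
      inv_mul_cancel₀ hg.ne']
  · rwa [sub_pos, div_lt_one hg]
  · ext y
    simp only [sphereSlice, FunLike.coe_smul, Pi.smul_apply, smul_eq_mul,
      RCLike.re_ofReal_mul, StrongDual.re_extendRCLike_apply, sub_sub_cancel, mem_ofPred_eq]
    rw [div_lt_iff₀ hg, inv_mul_eq_div, div_mul_cancel₀ _ hg.ne']

theorem IsLipSlice.exists_sphereSlice_subset [NormedSpace ℝ X] [IsScalarTower ℝ 𝕜 X]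
    {S : Set X} (hS : IsLipSlice S) :
    ∃ (h : StrongDual 𝕜 X) (δ : ℝ), ‖h‖ = 1 ∧ 0 < δ ∧ sphereSlice 𝕜 h δ ⊆ S := by
  obtain ⟨f, ε, ⟨C, hC⟩, ⟨a, b, hab⟩, hε, rfl⟩ := hS
  obtain ⟨g, hg, hgε, hsub⟩ := hC.exists_strongDual_subset_lipSlice hab hε
  obtain ⟨h, δ, hh, hδ, heq⟩ := exists_sphereSlice_eq_of_lt_norm (𝕜 := 𝕜) g hg hgε
  exact ⟨h, δ, hh, hδ, heq ▸ hsub⟩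

end SphereSlices

section AltDaugavet

variable {𝕜 X : Type*} [RCLike 𝕜] [NormedAddCommGroup X] [NormedSpace 𝕜 X] [NormedSpace ℝ X]
  [IsScalarTower ℝ 𝕜 X]

theorem exists_mem_sphereSlice_of_two_sub_lt_norm_add {h : StrongDual 𝕜 X} (hh : ‖h‖ ≤ 1)
    {x z : X} (hx : ‖x‖ = 1) (hz : ‖z‖ ≤ 1) {θ : 𝕜} (hθ : ‖θ‖ = 1) {η : ℝ} (hη : η < 1)
    (hzx : 2 - η < ‖z + (θ * h z) • x‖) :
    ∃ y ∈ sphereSlice 𝕜 h η, 2 - 2 * η < ‖x + θ⁻¹ • y‖ := by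
  set w := h z
  have hγx : ‖(θ * w) • x‖ = ‖w‖ := by rw [norm_smul, norm_mul, hθ, hx, one_mul, mul_one]
  have hwz : ‖w‖ ≤ ‖z‖ := (h.le_opNorm z).trans (mul_le_of_le_one_left (norm_nonneg z) hh)
  have hw : 1 - η < ‖w‖ := by linarith [norm_add_le z ((θ * w) • x)]
  have hw0 : 0 < ‖w‖ := by linarith
  have hz0 : 0 < ‖z‖ := hw0.trans_le hwz
  have hw0' : w ≠ 0 := norm_pos_iff.1 hw0
  set y := (((‖w‖ / ‖z‖ : ℝ) : 𝕜) / w) • z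
  have hhy : h y = ((‖w‖ / ‖z‖ : ℝ) : 𝕜) := by
    simp only [y, map_smul, smul_eq_mul]
    exact div_mul_cancel₀ _ hw0'
  have hy : ‖y‖ = 1 := by
    rw [norm_smul, norm_div, RCLike.norm_ofReal, abs_of_pos (div_pos hw0 hz0)]
    field_simp
  have hθ0 : θ ≠ 0 := norm_ne_zero_iff.1 (hθ.trans_ne one_ne_zero)
  have hwk : ((‖w‖ : ℝ) : 𝕜) ≠ 0 := RCLike.ofReal_ne_zero.2 hw0.ne'
  have hrot : ((θ * w) / ‖w‖) • (x + θ⁻¹ • y)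
      = ‖z‖⁻¹ • z + ‖(θ * w) • x‖⁻¹ • ((θ * w) • x) := by
    rw [hγx, RCLike.real_smul_eq_coe_smul (K := 𝕜), RCLike.real_smul_eq_coe_smul (K := 𝕜),
      smul_add, smul_smul, smul_smul, smul_smul, add_comm]
    congr 2
    · push_cast
      field_simp
    · push_cast
      ring
  have hrot_norm : ‖(θ * w) / (‖w‖ : 𝕜)‖ = 1 := by
    rw [norm_div, norm_mul, hθ, one_mul, RCLike.norm_ofReal, abs_norm, div_self hw0.ne']
  refine ⟨y, ⟨hy, ?_⟩, ?_⟩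
  · rw [hhy, RCLike.ofReal_re]
    exact hw.trans_le ((le_div_iff₀ hz0).2 (mul_le_of_le_one_right (norm_nonneg w) hz))
  · have := two_mul_norm_add_sub_two_le hz (hγx.trans_le (hwz.trans hz))
    rw [← hrot, norm_smul, hrot_norm, one_mul] at this
    linarith

theorem AltDaugavetProperty.exists_mem_sphereSlice_lt_norm_add (hX : AltDaugavetProperty 𝕜 X)
    {h : StrongDual 𝕜 X} (hh : ‖h‖ = 1) {x : X} (hx : ‖x‖ = 1) {δ : ℝ} (hδ : 0 < δ) :
    ∃ y ∈ sphereSlice 𝕜 h δ, ∃ θ : 𝕜, ‖θ‖ = 1 ∧ 2 - δ < ‖x + θ • y‖ := by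
  set η := min δ 1 / 2
  have hηδ : η ≤ δ / 2 := by simp only [η]; linarith [min_le_left δ 1]
  have hη1 : η ≤ 1 / 2 := by simp only [η]; linarith [min_le_right δ 1]
  have hη0 : 0 < η := by positivity
  obtain ⟨θ, hθ, hnorm⟩ := (hX (h.smulRight x) ⟨h, x, fun _ => rfl⟩).1
  have hT : ‖h.smulRight x‖ = 1 := by
    rw [ContinuousLinearMap.norm_smulRight_apply, hh, hx, one_mul]
  obtain ⟨z, hz, hzT⟩ :=
    (ContinuousLinearMap.id 𝕜 X + θ • h.smulRight x).exists_lt_apply_of_lt_opNorm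
    (show 2 - η < _ by rw [← hnorm, hT]; linarith)
  have happ : (ContinuousLinearMap.id 𝕜 X + θ • h.smulRight x) z = z + (θ * h z) • x := by
    simp [smul_smul]
  rw [happ] at hzT
  obtain ⟨y, hy, hxy⟩ :=
    exists_mem_sphereSlice_of_two_sub_lt_norm_add hh.le hx hz.le hθ (by linarith) hzT
  exact ⟨y, sphereSlice_mono (by linarith) hy, θ⁻¹, by rw [norm_inv, hθ, inv_one], by linarith⟩

end AltDaugavet

theorem alt_daugavet_lip_slice_norming_general {𝕜 X : Type*} [RCLike 𝕜] [NormedAddCommGroup X] [NormedSpace 𝕜 X]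
    [NormedSpace ℝ X] [IsScalarTower ℝ 𝕜 X]
    (hX : AltDaugavetProperty 𝕜 X) (ε : ℝ) (hε : 0 < ε) (S : Set X) (hS : IsLipSlice S) :
    ∀ x : X, ‖x‖ = 1 → ∃ y ∈ S, ∃ θ : 𝕜, ‖θ‖ = 1 ∧ 2 - ε < ‖x + θ • y‖ := by
  intro x hx
  obtain ⟨h, δ, hh, hδ, hsub⟩ := hS.exists_sphereSlice_subset (𝕜 := 𝕜)
  obtain ⟨y, hy, θ, hθ, hlt⟩ := hX.exists_mem_sphereSlice_lt_norm_add hh hx (lt_min hδ hε)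
  exact ⟨y, hsub (sphereSlice_mono (min_le_left δ ε) hy), θ, hθ,
    by linarith [min_le_right δ ε]⟩

/-- In a space with the alternative Daugavet property, every Lip-slice contains, for
every point x of the sphere, an element y with max over unimodular θ of ‖x + θ y‖
exceeding 2 - ε. -/
theorem alt_daugavet_lip_slice_norming {𝕜 X : Type*} [RCLike 𝕜] [NormedAddCommGroup X] [NormedSpace 𝕜 X]
    [NormedSpace ℝ X] [IsScalarTower ℝ 𝕜 X] [CompleteSpace X]
    (hX : AltDaugavetProperty 𝕜 X) (ε : ℝ) (hε : 0 < ε) (S : Set X) (hS : IsLipSlice S) :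
    ∀ x : X, ‖x‖ = 1 → ∃ y ∈ S, ∃ θ : 𝕜, ‖θ‖ = 1 ∧ 2 - ε < ‖x + θ • y‖ :=
  alt_daugavet_lip_slice_norming_general hX ε hε S hS
end

section
/- Let X be a Banach space and let A ⊆ X be a bounded set. If the closed convex hull of A is an SCD set, then A is an SCD set. -/
open Set Metric Topology

/-!
A closed half-space containing `A` contains its closed convex hull, so every slice of the hull
meets `A`. Tracing a determining sequence of slices of the hull on `A` therefore gives slices of
`A`, and a set meeting all of them determines the hull, hence `A`.
-/

section

variable {𝕜 X : Type*} [RCLike 𝕜] [NormedAddCommGroup X] [NormedSpace 𝕜 X]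

theorem IsSlice.inter_of_subset {A C S : Set X} (hAC : A ⊆ C) (hS : IsSlice 𝕜 C S)
    (hne : (A ∩ S).Nonempty) : IsSlice 𝕜 A (A ∩ S) := by
  obtain ⟨-, f, α, hf, rfl⟩ := hS
  refine ⟨hne, f, α, hf, ?_⟩
  ext x
  exact ⟨fun ⟨hxA, _, hx⟩ => ⟨hxA, hx⟩, fun ⟨hxA, hx⟩ => ⟨hxA, hAC hxA, hx⟩⟩

variable [NormedSpace ℝ X]

theorem closure_convexHull_subset_setOf_re_le {A : Set X} {f : X →L[𝕜] 𝕜} {α : ℝ}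
    (hA : ∀ x ∈ A, RCLike.re (f x) ≤ α) :
    closure (convexHull ℝ A) ⊆ {x | RCLike.re (f x) ≤ α} := by
  -- `restrictScalars ℝ` uses `Real.isScalarTower`: a topological vector space carries at most
  -- one continuous `ℝ`-module structure, so the given one agrees with the one coming from `𝕜`.
  let g : X →L[ℝ] ℝ := RCLike.reCLM.comp (f.restrictScalars ℝ)
  have hconv : Convex ℝ {x | g x ≤ α} := convex_halfSpace_le g.isLinear α
  have hclosed : IsClosed {x | g x ≤ α} := isClosed_le g.continuous continuous_const
  exact closure_minimal (convexHull_min hA hconv) hclosed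

theorem IsSlice.inter_nonempty_of_closure_convexHull {A S : Set X}
    (hS : IsSlice 𝕜 (closure (convexHull ℝ A)) S) : (A ∩ S).Nonempty := by
  obtain ⟨⟨z, hz⟩, f, α, -, rfl⟩ := hS
  by_contra hA
  have hle : ∀ x ∈ A, RCLike.re (f x) ≤ α := fun x hx =>
    not_lt.mp fun hlt => hA ⟨x, hx, subset_closure (subset_convexHull ℝ A hx), hlt⟩
  exact (closure_convexHull_subset_setOf_re_le hle hz.1).not_gt hz.2

end

theorem scd_of_scd_closedConvexHull_general {𝕜 X : Type*} [RCLike 𝕜] [NormedAddCommGroup X] [NormedSpace 𝕜 X]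
    [NormedSpace ℝ X]
    (A : Set X)
    (h : IsSCD 𝕜 (closure (convexHull ℝ A))) : IsSCD 𝕜 A := by
  obtain ⟨S, hS, hdet⟩ := h
  have hAC : A ⊆ closure (convexHull ℝ A) := (subset_convexHull ℝ A).trans subset_closure
  refine ⟨fun n => A ∩ S n,
    fun n => (hS n).inter_of_subset hAC (hS n).inter_nonempty_of_closure_convexHull, ?_⟩
  intro B hBA hB
  refine hAC.trans (hdet B (hBA.trans hAC) fun n => ?_)
  exact (hB n).mono (inter_subset_inter_right B inter_subset_right)

/-- If the closed convex hull of a bounded set is SCD, then so is the set itself. -/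
theorem scd_of_scd_closedConvexHull {𝕜 X : Type*} [RCLike 𝕜] [NormedAddCommGroup X] [NormedSpace 𝕜 X]
    [NormedSpace ℝ X] [IsScalarTower ℝ 𝕜 X] [CompleteSpace X]
    (A : Set X) (hA : Bornology.IsBounded A)
    (h : IsSCD 𝕜 (closure (convexHull ℝ A))) : IsSCD 𝕜 A :=
  scd_of_scd_closedConvexHull_general A h
end

section
/- Let X be a Banach space over 𝕂 (𝕂 = ℝ or ℂ) with the alternative Daugavet property. Then every Lipschitz map T: X → X for which slope(T) is an SCD set satisfies the alternative Daugavet equation max_{θ ∈ 𝕋} ‖Id + θ·T‖ = 1 + ‖T‖, where 𝕋 = {θ ∈ 𝕂 : |θ| = 1} and ‖·‖ denotes the Lipschitz seminorm. -/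
open Set Metric Topology

/-!
Since `θ ↦ ‖Id + θ T‖` is continuous on the compact circle and bounded by `1 + ‖T‖`, it suffices
to approximate `1 + ‖T‖` by difference quotients of maps `Id + θ T`.

For a slice `S` of `slope(T)`, the directions `u` admitting no pair `(x + t u, x)` with slope in
`S` form a closed convex set, so Hahn–Banach separation gives a slice `{Re H > β}` of the sphere
made of directions of such pairs. The alternative Daugavet property for the rank-one operator
`H ⊗ v` turns a unit vector `v` into a unit vector `v'` such that every functional of the dual
ball almost norming `v'` almost norms `v` and some direction in `{Re H > β}`. Iterating over the
determining slices and intersecting the resulting nested weak*-compact sets of functionals gives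
one functional `f` almost norming the direction of a slope of almost maximal norm and a direction
of every slice. By the SCD property some slice lies in `{|f| > ‖T‖ - ε}`; for a pair from it with
direction `u` and slope `z`, a rotation `θ` with `|f u + θ f z| = |f u| + |f z|` makes
`‖u + θ z‖` almost `1 + ‖T‖`.
-/

section LipschitzSeminorm

variable {X Y : Type*} [NormedAddCommGroup X] [NormedAddCommGroup Y]

lemma lipSemi_nonneg (f : X → Y) : 0 ≤ lipSemi f :=
  Real.sSup_nonneg <| by rintro _ ⟨x₁, x₂, -, rfl⟩; positivity

lemma LipschitzWith.norm_sub_le_lipSemi_mul {C : NNReal} {f : X → Y} (hf : LipschitzWith C f)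
    (x₁ x₂ : X) : ‖f x₁ - f x₂‖ ≤ lipSemi f * ‖x₁ - x₂‖ := by
  rcases eq_or_ne x₁ x₂ with rfl | hne
  · simp
  have hpos : 0 < ‖x₁ - x₂‖ := norm_pos_iff.2 (sub_ne_zero.2 hne)
  have hbdd : BddAbove {r : ℝ | ∃ x₁ x₂ : X, x₁ ≠ x₂ ∧ r = ‖f x₁ - f x₂‖ / ‖x₁ - x₂‖} := by
    refine ⟨C, ?_⟩
    rintro _ ⟨y₁, y₂, -, rfl⟩
    have := div_le_of_le_mul₀ dist_nonneg C.2 (hf.dist_le_mul y₁ y₂)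
    rwa [dist_eq_norm, dist_eq_norm] at this
  rw [← div_le_iff₀ hpos]
  exact le_csSup hbdd ⟨x₁, x₂, hne, rfl⟩

lemma lipSemi_le {f : X → Y} {M : ℝ} (hM : 0 ≤ M)
    (h : ∀ x₁ x₂, ‖f x₁ - f x₂‖ ≤ M * ‖x₁ - x₂‖) : lipSemi f ≤ M := by
  refine Real.sSup_le ?_ hM
  rintro _ ⟨x₁, x₂, hne, rfl⟩
  exact div_le_of_le_mul₀ (norm_nonneg _) hM (h x₁ x₂)

lemma lipSemi_id_le : lipSemi (fun x : X => x) ≤ 1 :=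
  lipSemi_le zero_le_one fun _ _ => (one_mul _).ge

lemma lipSemi_add_le {Cf Cg : NNReal} {f g : X → Y} (hf : LipschitzWith Cf f)
    (hg : LipschitzWith Cg g) : lipSemi (fun x => f x + g x) ≤ lipSemi f + lipSemi g := by
  refine lipSemi_le (add_nonneg (lipSemi_nonneg f) (lipSemi_nonneg g)) fun x₁ x₂ => ?_
  calc ‖f x₁ + g x₁ - (f x₂ + g x₂)‖ ≤ ‖f x₁ - f x₂‖ + ‖g x₁ - g x₂‖ := by
        rw [add_sub_add_comm]; exact norm_add_le _ _
    _ ≤ (lipSemi f + lipSemi g) * ‖x₁ - x₂‖ := by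
        rw [add_mul]
        exact add_le_add (hf.norm_sub_le_lipSemi_mul _ _) (hg.norm_sub_le_lipSemi_mul _ _)

lemma lipSemi_const_smul_le {𝕜 : Type*} [NormedField 𝕜] [NormedSpace 𝕜 Y] (c : 𝕜)
    {C : NNReal} {g : X → Y} (hg : LipschitzWith C g) :
    lipSemi (fun x => c • g x) ≤ ‖c‖ * lipSemi g := by
  refine lipSemi_le (by have := lipSemi_nonneg g; positivity) fun x₁ x₂ => ?_
  rw [← smul_sub, norm_smul, mul_assoc]
  exact mul_le_mul_of_nonneg_left (hg.norm_sub_le_lipSemi_mul _ _) (norm_nonneg c)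

end LipschitzSeminorm

section AddSmul

variable {𝕜 X : Type*} [RCLike 𝕜] [NormedAddCommGroup X] [NormedSpace 𝕜 X]
  {C : NNReal} {T : X → X}

lemma LipschitzWith.add_smul (hT : LipschitzWith C T) (θ : 𝕜) :
    LipschitzWith (1 + ‖θ‖₊ * C) (fun x => x + θ • T x) :=
  LipschitzWith.id.add ((lipschitzWith_smul θ).comp hT)

lemma lipSemi_add_smul_le_one_add (hT : LipschitzWith C T) (θ : 𝕜) :
    lipSemi (fun x => x + θ • T x) ≤ 1 + ‖θ‖ * lipSemi T :=
  (lipSemi_add_le LipschitzWith.id ((lipschitzWith_smul θ).comp hT)).trans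
    (add_le_add lipSemi_id_le (lipSemi_const_smul_le θ hT))

lemma lipSemi_add_smul_le (hT : LipschitzWith C T) (θ θ' : 𝕜) :
    lipSemi (fun x => x + θ • T x) ≤ lipSemi (fun x => x + θ' • T x) + ‖θ - θ'‖ * lipSemi T := by
  have hsplit : (fun x => x + θ • T x) = fun x => (x + θ' • T x) + (θ - θ') • T x := by
    ext x; rw [sub_smul]; abel
  rw [hsplit]
  exact (lipSemi_add_le (hT.add_smul θ')
    ((lipschitzWith_smul (θ - θ')).comp hT)).trans
    (add_le_add_right (lipSemi_const_smul_le _ hT) _)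

lemma continuous_lipSemi_add_smul (hT : LipschitzWith C T) :
    Continuous fun θ : 𝕜 => lipSemi (fun x => x + θ • T x) :=
  (LipschitzWith.of_le_add_mul' (lipSemi T) fun θ θ' => by
    rw [dist_eq_norm, mul_comm]; exact lipSemi_add_smul_le hT θ θ').continuous

end AddSmul

lemma exists_norm_eq_one_norm_add_mul {𝕜 : Type*} [RCLike 𝕜] (a b : 𝕜) :
    ∃ θ : 𝕜, ‖θ‖ = 1 ∧ ‖a + θ * b‖ = ‖a‖ + ‖b‖ := by
  obtain ⟨c₁, hc₁, ha⟩ := RCLike.exists_norm_mul_eq_self a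
  obtain ⟨c₂, hc₂, hb⟩ := RCLike.exists_norm_eq_mul_self b
  refine ⟨c₁ * c₂, by rw [norm_mul, hc₁, hc₂, one_mul], ?_⟩
  rw [mul_assoc, ← hb]
  nth_rw 1 [← ha]
  rw [← mul_add, norm_mul, hc₁, one_mul, ← RCLike.ofReal_add, RCLike.norm_ofReal,
    abs_of_nonneg (by positivity)]

lemma exists_norm_eq_one_eq_norm_smul {X : Type*} [NormedAddCommGroup X] [NormedSpace ℝ X]
    [Nontrivial X] (a : X) : ∃ v : X, ‖v‖ = 1 ∧ a = ‖a‖ • v := by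
  rcases eq_or_ne a 0 with rfl | ha
  · obtain ⟨v, hv⟩ := exists_norm_eq X zero_le_one
    exact ⟨v, hv, by simp⟩
  · exact ⟨‖a‖⁻¹ • a, norm_smul_inv_norm ha, (smul_inv_smul₀ (norm_ne_zero_iff.2 ha) a).symm⟩

section Norming

variable (𝕜 : Type*) {X : Type*} [RCLike 𝕜] [NormedAddCommGroup X] [NormedSpace 𝕜 X]

def normingSet (v : X) (γ : ℝ) : Set (StrongDual 𝕜 X) :=
  {f | ‖f‖ ≤ 1 ∧ 1 - γ ≤ ‖f v‖}

variable {𝕜}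

lemma normingSet_mono {v : X} {γ γ' : ℝ} (h : γ ≤ γ') :
    normingSet 𝕜 v γ ⊆ normingSet 𝕜 v γ' :=
  fun _ hf => ⟨hf.1, by linarith [hf.2]⟩

lemma normingSet_nonempty {v : X} (hv : ‖v‖ = 1) {γ : ℝ} (hγ : 0 ≤ γ) :
    (normingSet 𝕜 v γ).Nonempty := by
  obtain ⟨f, hf, hfv⟩ := exists_dual_vector 𝕜 v (by rw [hv]; exact one_ne_zero)
  exact ⟨f, hf.le, by rw [hfv, hv, RCLike.norm_ofReal, abs_one]; linarith⟩

lemma isCompact_normingSet (v : X) (γ : ℝ) :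
    IsCompact (WeakDual.toStrongDual ⁻¹' normingSet 𝕜 v γ) := by
  have : WeakDual.toStrongDual ⁻¹' normingSet 𝕜 v γ =
      WeakDual.toStrongDual ⁻¹' closedBall 0 1 ∩ {φ : WeakDual 𝕜 X | 1 - γ ≤ ‖φ v‖} := by
    ext φ; simp [normingSet]
  rw [this]
  exact (WeakDual.isCompact_closedBall 0 1).inter_right
    (isClosed_le continuous_const (WeakDual.eval_continuous v).norm)

theorem exists_mem_normingSet_forall_exists {P : ℕ → Set X}
    (hstep : ∀ n (v : X) (γ : ℝ), ‖v‖ = 1 → 0 < γ → ∃ v', ‖v'‖ = 1 ∧ ∃ γ' ∈ Ioc 0 γ,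
      ∃ u ∈ P n, normingSet 𝕜 v' γ' ⊆ normingSet 𝕜 v γ ∩ normingSet 𝕜 u γ)
    {v₀ : X} (hv₀ : ‖v₀‖ = 1) {γ₀ : ℝ} (hγ₀ : 0 < γ₀) :
    ∃ f ∈ normingSet 𝕜 v₀ γ₀, ∀ n, ∃ u ∈ P n, f ∈ normingSet 𝕜 u γ₀ := by
  choose! V hV Γ hΓ U hU hsub using hstep
  let s : ℕ → X × ℝ := fun n => Nat.rec (v₀, γ₀) (fun k p => (V k p.1 p.2, Γ k p.1 p.2)) n
  have hs : ∀ n, ‖(s n).1‖ = 1 ∧ 0 < (s n).2 ∧ (s n).2 ≤ γ₀ := by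
    intro n
    induction n with
    | zero => exact ⟨hv₀, hγ₀, le_rfl⟩
    | succ k ih =>
      have hΓk := hΓ k _ _ ih.1 ih.2.1
      exact ⟨hV k _ _ ih.1 ih.2.1, hΓk.1, hΓk.2.trans ih.2.2⟩
  have hnext : ∀ n, normingSet 𝕜 (s (n + 1)).1 (s (n + 1)).2 ⊆
      normingSet 𝕜 (s n).1 (s n).2 ∩ normingSet 𝕜 (U n (s n).1 (s n).2) (s n).2 :=
    fun n => hsub n _ _ (hs n).1 (hs n).2.1
  obtain ⟨φ, hφ⟩ := IsCompact.nonempty_iInter_of_sequence_nonempty_isCompact_isClosed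
    (fun n => WeakDual.toStrongDual ⁻¹' normingSet 𝕜 (s n).1 (s n).2)
    (fun n => preimage_mono ((hnext n).trans inter_subset_left))
    (fun n => by
      obtain ⟨f, hf⟩ := normingSet_nonempty (𝕜 := 𝕜) (hs n).1 (hs n).2.1.le
      exact ⟨StrongDual.toWeakDual f, hf⟩)
    (isCompact_normingSet _ _) (fun n => (isCompact_normingSet _ _).isClosed)
  rw [mem_iInter] at hφ
  exact ⟨_, hφ 0, fun n => ⟨_, hU n _ _ (hs n).1 (hs n).2.1,
    normingSet_mono (hs n).2.2 (hnext n (hφ (n + 1))).2⟩⟩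

end Norming

section Daugavet

open RCLike

variable {𝕜 X : Type*} [RCLike 𝕜] [NormedAddCommGroup X] [NormedSpace 𝕜 X]

lemma AltDaugavetProperty.exists_lt_norm_add_smul (hX : AltDaugavetProperty 𝕜 X) {v : X}
    (hv : ‖v‖ = 1) {H : StrongDual 𝕜 X} (hH : ‖H‖ = 1) {δ : ℝ} (hδ : 0 < δ) :
    ∃ y : X, ‖y‖ = 1 ∧ 1 - δ < ‖H y‖ ∧ ∃ c : 𝕜, ‖c‖ ≤ 1 ∧ 2 - δ < ‖y + c • v‖ := by
  obtain ⟨θ, hθ, hnorm⟩ := (hX (H.smulRight v) ⟨H, v, fun _ => rfl⟩).1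
  rw [ContinuousLinearMap.norm_smulRight_apply, hH, hv] at hnorm
  obtain ⟨y, hy, hlt⟩ := ContinuousLinearMap.exists_nnnorm_eq_one_lt_apply_of_lt_opNNNorm
    (ContinuousLinearMap.id 𝕜 X + θ • H.smulRight v) (r := (2 - δ).toNNReal)
    (by rw [← NNReal.coe_lt_coe, coe_nnnorm, ← hnorm, Real.coe_toNNReal']; norm_num [hδ])
  rw [← NNReal.coe_lt_coe, coe_nnnorm, Real.coe_toNNReal'] at hlt
  replace hlt := (le_max_left _ _).trans_lt hlt
  replace hy : ‖y‖ = 1 := by rw [← coe_nnnorm, hy, NNReal.coe_one]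
  have happ : (ContinuousLinearMap.id 𝕜 X + θ • H.smulRight v) y = y + (θ * H y) • v := by
    simp [mul_smul]
  rw [happ] at hlt
  have hHy : ‖H y‖ ≤ 1 := by simpa [hH, hy] using H.le_opNorm y
  have hsum : ‖y + (θ * H y) • v‖ ≤ 1 + ‖H y‖ := by
    simpa [norm_smul, hθ, hv, hy] using norm_add_le y ((θ * H y) • v)
  refine ⟨y, hy, by linarith, θ * H y, ?_, hlt⟩
  rwa [norm_mul, hθ, one_mul]

lemma AltDaugavetProperty.exists_normingSet_subset (hX : AltDaugavetProperty 𝕜 X)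
    {H : StrongDual 𝕜 X} (hH : ‖H‖ = 1) {β : ℝ} (hβ : β < 1) {v : X} (hv : ‖v‖ = 1)
    {γ : ℝ} (hγ : 0 < γ) :
    ∃ v' : X, ‖v'‖ = 1 ∧ ∃ u : X, ‖u‖ = 1 ∧ β < re (H u) ∧
      normingSet 𝕜 v' (γ / 3) ⊆ normingSet 𝕜 v γ ∩ normingSet 𝕜 u γ := by
  set δ := min (min (γ / 3) (1 - β)) 1
  have hδγ : δ ≤ γ / 3 := (min_le_left _ _).trans (min_le_left _ _)
  have hδβ : δ ≤ 1 - β := (min_le_left _ _).trans (min_le_right _ _)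
  have hδ1 : δ ≤ 1 := min_le_right _ _
  obtain ⟨y, hy, hHy, c, hc, hsum⟩ := hX.exists_lt_norm_add_smul hv hH (δ := δ) (by positivity)
  obtain ⟨μ, hμ, hμHy⟩ := exists_norm_eq_mul_self (H y)
  -- `‖w‖` is almost `2`, so a functional of the dual ball almost norming `w / ‖w‖` almost
  -- norms both `y` and `v`
  set w := y + c • v
  have hs : 0 < ‖w‖ := by linarith
  refine ⟨(‖w‖⁻¹ : 𝕜) • w, norm_smul_inv_norm (norm_pos_iff.1 hs), μ • y,
    by rw [norm_smul, hμ, hy, one_mul], ?_, ?_⟩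
  · rw [map_smul, smul_eq_mul, ← hμHy, ofReal_re]
    linarith
  rintro f ⟨hf, hfw⟩
  have hfx : ∀ x : X, ‖x‖ = 1 → ‖f x‖ ≤ 1 := fun x hx => by
    simpa [hx] using f.le_of_opNorm_le hf x
  have hfw_eq : ‖f ((‖w‖⁻¹ : 𝕜) • w)‖ * ‖w‖ = ‖f w‖ := by
    rw [map_smul, norm_smul, norm_inv, norm_ofReal, abs_norm, mul_right_comm,
      inv_mul_cancel₀ hs.ne', one_mul]
  have hfw_le : ‖f w‖ ≤ ‖f y‖ + ‖f v‖ := by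
    calc ‖f w‖ ≤ ‖f y‖ + ‖c‖ * ‖f v‖ := by
          rw [map_add, map_smul, smul_eq_mul, ← norm_mul]; exact norm_add_le _ _
      _ ≤ ‖f y‖ + ‖f v‖ := by gcongr; exact mul_le_of_le_one_left (norm_nonneg _) hc
  have hw2 : ‖w‖ ≤ 2 := by
    calc ‖w‖ ≤ ‖y‖ + ‖c‖ * ‖v‖ := by rw [← norm_smul]; exact norm_add_le _ _
      _ ≤ 2 := by rw [hy, hv]; linarith
  have hlow : 2 - γ ≤ ‖f w‖ := by
    rw [← hfw_eq]
    rcases le_total γ 3 with h3 | h3 <;> nlinarith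
  refine ⟨⟨hf, by linarith [hfx y hy]⟩, hf, ?_⟩
  rw [map_smul, norm_smul, hμ, one_mul]
  linarith [hfx v hv]

end Daugavet

section Slopes

open RCLike

variable {𝕜 X : Type*} [RCLike 𝕜] [NormedAddCommGroup X] [NormedSpace 𝕜 X]
  [NormedSpace ℝ X] [IsScalarTower ℝ 𝕜 X] {C : NNReal} {T : X → X}

lemma norm_add_smul_sub_self {u : X} (hu : ‖u‖ = 1) {t : ℝ} (ht : 0 ≤ t) (x : X) :
    ‖x + t • u - x‖ = t := by
  rw [add_sub_cancel_left, norm_smul, hu, mul_one, Real.norm_of_nonneg ht]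

lemma mem_lipSlope_iff {a : X} : a ∈ lipSlope T ↔
    ∃ x u : X, ‖u‖ = 1 ∧ ∃ t : ℝ, 0 < t ∧ a = t⁻¹ • (T (x + t • u) - T x) := by
  constructor
  · rintro ⟨x₁, x₂, hne, rfl⟩
    have hd : x₁ - x₂ ≠ 0 := sub_ne_zero.2 hne
    refine ⟨x₂, ‖x₁ - x₂‖⁻¹ • (x₁ - x₂), norm_smul_inv_norm hd, ‖x₁ - x₂‖, norm_pos_iff.2 hd, ?_⟩
    rw [smul_inv_smul₀ (norm_ne_zero_iff.2 hd), add_sub_cancel]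
  · rintro ⟨x, u, hu, t, ht, rfl⟩
    refine ⟨x + t • u, x, fun h => ?_, by rw [norm_add_smul_sub_self hu ht.le]⟩
    have := norm_add_smul_sub_self hu ht.le x
    rw [h, sub_self, norm_zero] at this
    exact ht.ne this

lemma norm_le_lipSemi_of_mem_lipSlope (hT : LipschitzWith C T) {a : X} (ha : a ∈ lipSlope T) :
    ‖a‖ ≤ lipSemi T := by
  obtain ⟨x₁, x₂, hne, rfl⟩ := ha
  have hpos : 0 < ‖x₁ - x₂‖ := norm_pos_iff.2 (sub_ne_zero.2 hne)
  rw [norm_smul, norm_inv, norm_norm, inv_mul_le_iff₀ hpos, mul_comm]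
  exact hT.norm_sub_le_lipSemi_mul x₁ x₂

lemma exists_mem_lipSlope_lt_norm (hne : (lipSlope T).Nonempty) {r : ℝ} (hr : r < lipSemi T) :
    ∃ a ∈ lipSlope T, r < ‖a‖ := by
  obtain ⟨-, x₁, x₂, hx, -⟩ := hne
  have hs : {r : ℝ | ∃ x₁ x₂ : X, x₁ ≠ x₂ ∧ r = ‖T x₁ - T x₂‖ / ‖x₁ - x₂‖}.Nonempty :=
    ⟨_, x₁, x₂, hx, rfl⟩
  obtain ⟨-, ⟨y₁, y₂, hy, rfl⟩, hlt⟩ := exists_lt_of_lt_csSup hs hr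
  refine ⟨_, ⟨y₁, y₂, hy, rfl⟩, ?_⟩
  rwa [norm_smul, norm_inv, norm_norm, inv_mul_eq_div]

lemma norm_add_smul_slope_le_lipSemi (hT : LipschitzWith C T) (θ : 𝕜) {u : X} (hu : ‖u‖ = 1)
    {t : ℝ} (ht : 0 < t) (x : X) :
    ‖u + θ • t⁻¹ • (T (x + t • u) - T x)‖ ≤ lipSemi (fun y => y + θ • T y) := by
  have h := (hT.add_smul θ).norm_sub_le_lipSemi_mul (x + t • u) x
  have hfactor : (fun y => y + θ • T y) (x + t • u) - (fun y => y + θ • T y) x =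
      t • (u + θ • t⁻¹ • (T (x + t • u) - T x)) := by
    simp only [smul_add, smul_comm t θ, smul_inv_smul₀ ht.ne', smul_sub]
    abel
  rw [norm_add_smul_sub_self hu ht.le, hfactor, norm_smul, Real.norm_of_nonneg ht.le,
    mul_comm] at h
  exact le_of_mul_le_mul_right h ht

lemma lt_re_apply_inv_smul_iff (g : StrongDual 𝕜 X) {t : ℝ} (ht : 0 < t) (α : ℝ) (b : X) :
    α < re (g (t⁻¹ • b)) ↔ α * t < re (g b) := by
  rw [ContinuousLinearMap.map_smul_of_tower, smul_re, lt_inv_mul_iff₀ ht, mul_comm]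

lemma convex_setOf_forall_sub_le (h : X → ℝ) (α : ℝ) :
    Convex ℝ {u : X | ∀ x, ∀ t : ℝ, 0 ≤ t → h (x + t • u) - h x ≤ α * t} := by
  intro u₁ hu₁ u₂ hu₂ a b ha hb hab x t ht
  have hx : x + t • (a • u₁ + b • u₂) = (x + (t * b) • u₂) + (t * a) • u₁ := by
    rw [smul_add, mul_smul, mul_smul]; abel
  have hαt : α * (t * a) + α * (t * b) = α * t := by rw [← mul_add, ← mul_add, hab, mul_one]
  rw [hx]
  linarith [hu₁ (x + (t * b) • u₂) (t * a) (mul_nonneg ht ha), hu₂ x (t * b) (mul_nonneg ht hb)]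

lemma isClosed_setOf_forall_sub_le {h : X → ℝ} (hh : Continuous h) (α : ℝ) :
    IsClosed {u : X | ∀ x, ∀ t : ℝ, 0 ≤ t → h (x + t • u) - h x ≤ α * t} := by
  simp only [ofPred_forall]
  exact isClosed_iInter fun x => isClosed_iInter fun t => isClosed_iInter fun _ =>
    isClosed_le (by fun_prop) continuous_const

lemma exists_slice_subset_setOf_lt_sub {h : X → ℝ} (hh : Continuous h) (α : ℝ) {w : X}
    (hw : ‖w‖ = 1) (hwα : ∃ x, ∃ t : ℝ, 0 < t ∧ α * t < h (x + t • w) - h x) :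
    ∃ H : StrongDual 𝕜 X, ‖H‖ = 1 ∧ ∃ β < 1, ∀ u, β < re (H u) →
      ∃ x, ∃ t : ℝ, 0 < t ∧ α * t < h (x + t • u) - h x := by
  set D := {u : X | ∀ x, ∀ t : ℝ, 0 ≤ t → h (x + t • u) - h x ≤ α * t}
  have hD : ∀ u ∉ D, ∃ x, ∃ t : ℝ, 0 < t ∧ α * t < h (x + t • u) - h x := by
    intro u hu
    simp only [D, mem_ofPred_eq, not_forall, not_le] at hu
    obtain ⟨x, t, ht, hlt⟩ := hu
    refine ⟨x, t, ht.lt_of_ne fun h0 => ?_, hlt⟩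
    simp [← h0] at hlt
  have hwD : w ∉ D := fun hwD => by
    obtain ⟨x, t, ht, hlt⟩ := hwα
    linarith [hwD x t ht.le]
  obtain ⟨f, s, hfD, hfw⟩ := RCLike.geometric_hahn_banach_closed_point (𝕜 := 𝕜)
    (convex_setOf_forall_sub_le h α) (isClosed_setOf_forall_sub_le hh α) hwD
  rcases eq_or_ne f 0 with rfl | hf
  · -- `f = 0` forces the set of bad directions to be empty
    obtain ⟨H, hH, -⟩ := exists_dual_vector 𝕜 w (by rw [hw]; exact one_ne_zero)
    refine ⟨H, hH, 0, one_pos, fun u _ => hD u fun hu => ?_⟩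
    have := hfD u hu
    simp only [zero_apply, map_zero] at this hfw
    linarith
  have hfpos : 0 < ‖f‖ := norm_pos_iff.2 hf
  have hre : ∀ u, re ((((‖f‖⁻¹ : ℝ) : 𝕜) • f) u) = ‖f‖⁻¹ * re (f u) := fun u => by
    rw [smul_apply, smul_eq_mul, re_ofReal_mul]
  refine ⟨((‖f‖⁻¹ : ℝ) : 𝕜) • f, ?_, ‖f‖⁻¹ * s, ?_, fun u hu => hD u fun huD => ?_⟩
  · rw [norm_smul, norm_ofReal, abs_of_pos (inv_pos.2 hfpos), inv_mul_cancel₀ hfpos.ne']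
  · rw [inv_mul_lt_iff₀ hfpos, mul_one]
    calc s < re (f w) := hfw
      _ ≤ ‖f w‖ := re_le_norm _
      _ ≤ ‖f‖ := by simpa [hw] using f.le_opNorm w
  · rw [hre, mul_lt_mul_iff_right₀ (inv_pos.2 hfpos)] at hu
    linarith [hfD u huD]

lemma IsSlice.exists_slice_subset_directions (hT : LipschitzWith C T) {S : Set X}
    (hS : IsSlice 𝕜 (lipSlope T) S) :
    ∃ H : StrongDual 𝕜 X, ‖H‖ = 1 ∧ ∃ β < 1, ∀ u, ‖u‖ = 1 → β < re (H u) →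
      ∃ x, ∃ t : ℝ, 0 < t ∧ t⁻¹ • (T (x + t • u) - T x) ∈ S := by
  obtain ⟨⟨a, ha⟩, g, α, -, rfl⟩ := hS
  obtain ⟨x, w, hw, t, ht, rfl⟩ := mem_lipSlope_iff.1 ha.1
  have hre_sub : ∀ x y, re (g (T x)) - re (g (T y)) = re (g (T x - T y)) := fun x y => by
    rw [map_sub, map_sub]
  obtain ⟨H, hH, β, hβ, hdir⟩ := exists_slice_subset_setOf_lt_sub (𝕜 := 𝕜)
    (h := fun y => re (g (T y))) (by have := hT.continuous; fun_prop) α hw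
    ⟨x, t, ht, by simpa only [hre_sub] using (lt_re_apply_inv_smul_iff g ht α _).1 ha.2⟩
  refine ⟨H, hH, β, hβ, fun u hu hβu => ?_⟩
  obtain ⟨x', t', ht', hlt⟩ := hdir u hβu
  exact ⟨x', t', ht', mem_lipSlope_iff.2 ⟨x', u, hu, t', ht', rfl⟩,
    (lt_re_apply_inv_smul_iff g ht' α _).2 (by simpa only [hre_sub] using hlt)⟩

lemma AltDaugavetProperty.exists_normingSet_subset_of_isSlice (hX : AltDaugavetProperty 𝕜 X)
    (hT : LipschitzWith C T) {S : Set X}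
    (hS : IsSlice 𝕜 (lipSlope T) S) {v : X} (hv : ‖v‖ = 1) {γ : ℝ} (hγ : 0 < γ) :
    ∃ v' : X, ‖v'‖ = 1 ∧ ∃ u : X, ‖u‖ = 1 ∧
      (∃ x, ∃ t : ℝ, 0 < t ∧ t⁻¹ • (T (x + t • u) - T x) ∈ S) ∧
      normingSet 𝕜 v' (γ / 3) ⊆ normingSet 𝕜 v γ ∩ normingSet 𝕜 u γ := by
  obtain ⟨H, hH, β, hβ, hdir⟩ := hS.exists_slice_subset_directions hT
  obtain ⟨v', hv', u, hu, hβu, hsub⟩ := hX.exists_normingSet_subset hH hβ hv hγ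
  exact ⟨v', hv', u, hu, hdir u hu hβu, hsub⟩

lemma exists_forall_lt_norm_apply_of_determining {A : Set X} {S : ℕ → Set X}
    (hSA : ∀ n, S n ⊆ A)
    (hdet : ∀ B ⊆ A, (∀ n, (B ∩ S n).Nonempty) → A ⊆ closure (convexHull ℝ B))
    (f : StrongDual 𝕜 X) {a : X} (ha : a ∈ A) {r : ℝ} (hr : r < ‖f a‖) :
    ∃ n, ∀ b ∈ S n, r < ‖f b‖ := by
  by_contra! hsmall
  have hA := hdet {b ∈ A | ‖f b‖ ≤ r} (sep_subset _ _) fun n => by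
    obtain ⟨b, hb, hbr⟩ := hsmall n
    exact ⟨b, ⟨hSA n hb, hbr⟩, hb⟩
  have hconv : Convex ℝ (f ⁻¹' closedBall 0 r) :=
    (convex_closedBall 0 r).linear_preimage (f.restrictScalars ℝ).toLinearMap
  have hball : closure (convexHull ℝ {b ∈ A | ‖f b‖ ≤ r}) ⊆ f ⁻¹' closedBall 0 r :=
    closure_minimal (convexHull_min (fun b hb => by simpa using hb.2) hconv)
      (isClosed_closedBall.preimage f.continuous)
  have := hball (hA ha)
  simp only [mem_preimage, mem_closedBall, dist_zero_right] at this
  linarith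

lemma exists_lt_lipSemi_add_smul (hX : AltDaugavetProperty 𝕜 X) (hT : LipschitzWith C T)
    (hscd : IsSCD 𝕜 (lipSlope T)) {ε : ℝ} (hε : 0 < ε) :
    ∃ θ : 𝕜, ‖θ‖ = 1 ∧ 1 + lipSemi T - ε < lipSemi (fun x => x + θ • T x) := by
  obtain ⟨S, hS, hdet⟩ := hscd
  have hSA : ∀ n, S n ⊆ lipSlope T := fun n => by
    obtain ⟨-, g, α, -, hSn⟩ := hS n
    exact hSn ▸ sep_subset _ _
  set L := lipSemi T
  obtain ⟨η, hη, rfl⟩ : ∃ η, 0 < η ∧ ε = 3 * η := ⟨ε / 3, by positivity, by ring⟩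
  have hnonempty : (lipSlope T).Nonempty := (hS 0).1.mono (hSA 0)
  obtain ⟨a₀, ha₀, ha₀L⟩ := exists_mem_lipSlope_lt_norm hnonempty (show L - η < L by linarith)
  have : Nontrivial X := by
    obtain ⟨-, x₁, x₂, hne, -⟩ := hnonempty
    exact ⟨x₁, x₂, hne⟩
  obtain ⟨v₀, hv₀, ha₀v₀⟩ := exists_norm_eq_one_eq_norm_smul a₀
  have hL := lipSemi_nonneg T
  set γ := η / (L + 1)
  have hγ : 0 < γ := by positivity
  have hγη : γ ≤ η := div_le_self (by positivity) (by linarith)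
  have hγL : γ * L ≤ η := by
    rw [div_mul_eq_mul_div, div_le_iff₀ (by positivity)]; nlinarith
  obtain ⟨f, ⟨hf, hfv₀⟩, hfu⟩ := exists_mem_normingSet_forall_exists
    (P := fun n => {u | ‖u‖ = 1 ∧ ∃ x, ∃ t : ℝ, 0 < t ∧ t⁻¹ • (T (x + t • u) - T x) ∈ S n})
    (fun n v γ hv hγ => by
      obtain ⟨v', hv', u, hu, hdir, hsub⟩ :=
        hX.exists_normingSet_subset_of_isSlice hT (hS n) hv hγ
      exact ⟨v', hv', γ / 3, ⟨by positivity, by linarith⟩, u, ⟨hu, hdir⟩, hsub⟩) hv₀ hγ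
  have hfa₀ : L - 2 * η < ‖f a₀‖ := by
    have ha₀le : ‖a₀‖ ≤ L := norm_le_lipSemi_of_mem_lipSlope hT ha₀
    rw [ha₀v₀, ContinuousLinearMap.map_smul_of_tower, norm_smul, norm_norm]
    nlinarith [norm_nonneg a₀]
  obtain ⟨n, hn⟩ := exists_forall_lt_norm_apply_of_determining hSA hdet f ha₀ hfa₀
  obtain ⟨u, ⟨hu, x, t, ht, hz⟩, -, hfu⟩ := hfu n
  set z := t⁻¹ • (T (x + t • u) - T x)
  obtain ⟨θ, hθ, hθfz⟩ := exists_norm_eq_one_norm_add_mul (f u) (f z)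
  refine ⟨θ, hθ, ?_⟩
  calc 1 + L - 3 * η < ‖f u‖ + ‖f z‖ := by linarith [hn z hz]
    _ = ‖f (u + θ • z)‖ := by rw [map_add, map_smul f θ z, smul_eq_mul, hθfz]
    _ ≤ ‖u + θ • z‖ := by simpa using f.le_of_opNorm_le hf (u + θ • z)
    _ ≤ lipSemi (fun x => x + θ • T x) := norm_add_smul_slope_le_lipSemi hT θ hu ht x

end Slopes

theorem alt_daugavet_eq_of_scd_slope_general {𝕜 X : Type*} [RCLike 𝕜] [NormedAddCommGroup X] [NormedSpace 𝕜 X]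
    [NormedSpace ℝ X] [IsScalarTower ℝ 𝕜 X]
    (hX : AltDaugavetProperty 𝕜 X) (T : X → X) (hT : ∃ C, LipschitzWith C T)
    (hscd : IsSCD 𝕜 (lipSlope T)) :
    IsGreatest {r : ℝ | ∃ θ : 𝕜, ‖θ‖ = 1 ∧ r = lipSemi (fun x : X => x + θ • T x)}
      (1 + lipSemi T) := by
  obtain ⟨C, hC⟩ := hT
  have hupper : ∀ θ : 𝕜, ‖θ‖ = 1 → lipSemi (fun x => x + θ • T x) ≤ 1 + lipSemi T :=
    fun θ hθ => by simpa [hθ] using lipSemi_add_smul_le_one_add hC θ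
  obtain ⟨θm, hθm, hmax⟩ := (isCompact_sphere (0 : 𝕜) 1).exists_isMaxOn
    (NormedSpace.sphere_nonempty.2 zero_le_one) (continuous_lipSemi_add_smul hC).continuousOn
  rw [mem_sphere_zero_iff_norm] at hθm
  refine ⟨⟨θm, hθm, le_antisymm ?_ (hupper θm hθm)⟩, fun _ ⟨θ, hθ, hr⟩ => hr ▸ hupper θ hθ⟩
  refine le_of_forall_pos_lt_add fun ε hε => ?_
  obtain ⟨θ, hθ, hlt⟩ := exists_lt_lipSemi_add_smul hX hC hscd hε
  have hle : lipSemi (fun x => x + θ • T x) ≤ lipSemi (fun x => x + θm • T x) :=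
    hmax (mem_sphere_zero_iff_norm.2 hθ)
  linarith

/-- In a space with the alternative Daugavet property, every Lipschitz map with SCD
slope satisfies the alternative Daugavet equation. -/
theorem alt_daugavet_eq_of_scd_slope {𝕜 X : Type*} [RCLike 𝕜] [NormedAddCommGroup X] [NormedSpace 𝕜 X]
    [NormedSpace ℝ X] [IsScalarTower ℝ 𝕜 X] [CompleteSpace X]
    (hX : AltDaugavetProperty 𝕜 X) (T : X → X) (hT : ∃ C, LipschitzWith C T)
    (hscd : IsSCD 𝕜 (lipSlope T)) :
    IsGreatest {r : ℝ | ∃ θ : 𝕜, ‖θ‖ = 1 ∧ r = lipSemi (fun x : X => x + θ • T x)}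
      (1 + lipSemi T) :=
  alt_daugavet_eq_of_scd_slope_general hX T hT hscd
end
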